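/- For all complex numbers x, y and natural numbers n, the sum over k from 0 to n of (-1)^k * x^(n-k) * (L_{k+1}(y) + (x*y - 2) * F_k(y)) equals (-1)^n * y * F_{n+1}(y), where F_n(y) and L_n(y) are the Fibonacci and Lucas polynomials. -/
import Mathlib


open Finset

noncomputable def fibP (y : ℂ) : ℕ → ℂ
  | 0 => 0
  | 1 => 1
  | n + 2 => y * fibP y (n + 1) + fibP y n

noncomputable def lucasP (y : ℂ) : ℕ → ℂ
  | 0 => 2
  | 1 => y
  | n + 2 => y * lucasP y (n + 1) + lucasP y n

lemma lucas_fib (y : ℂ) : ∀ n, lucasP y (n + 1) = y * fibP y (n + 1) + 2 * fibP y n := by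
  intro n
  induction n using Nat.twoStepInduction with
  | zero => simp [lucasP, fibP]
  | one => simp [lucasP, fibP]
  | more n ih1 ih2 =>
    show lucasP y (n + 3) = _
    rw [show n + 3 = (n + 1) + 2 from rfl, lucasP, fibP, ih1, ih2,
      show n + 2 = n + 1 + 1 from rfl, fibP]
    ring

theorem stmt17 (x y : ℂ) (n : ℕ) :
    ∑ k ∈ Finset.range (n + 1),
        (-1 : ℂ) ^ k * x ^ (n - k) * (lucasP y (k + 1) + (x * y - 2) * fibP y k) =
      (-1 : ℂ) ^ n * y * fibP y (n + 1) := by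
  induction n with
  | zero => simp [fibP, lucasP]
  | succ n ih =>
    rw [Finset.sum_range_succ]
    have h : ∑ k ∈ Finset.range (n + 1),
        (-1 : ℂ) ^ k * x ^ (n + 1 - k) * (lucasP y (k + 1) + (x * y - 2) * fibP y k)
        = x * ∑ k ∈ Finset.range (n + 1),
        (-1 : ℂ) ^ k * x ^ (n - k) * (lucasP y (k + 1) + (x * y - 2) * fibP y k) := by
      rw [Finset.mul_sum]
      refine Finset.sum_congr rfl fun k hk => ?_
      have hk' : k ≤ n := Nat.lt_succ_iff.mp (Finset.mem_range.mp hk)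
      rw [show n + 1 - k = (n - k) + 1 from by omega, pow_succ]
      ring
    rw [h, ih, Nat.sub_self, pow_zero, lucas_fib,
      show n + 1 + 1 = n + 2 from rfl, fibP]
    ring
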